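/- arXiv:2509.11393 — 3 statements merged into one kernel-verified Lean document; each statement's English description precedes it below -/
import Mathlib

section
/- Let M ≅ L ⊕ K be a retractive dgl over L with kernel K. Then every Maurer–Cartan element z of M can be written uniquely as z = x + y with x ∈ MC(L) and y ∈ MC(K, d_x), where (K, d_x) denotes K with the differential perturbed by x. -/
/-- A (ℤ-graded) differential graded Lie algebra over ℚ. -/
structure DGL where
  carrier : Type
  [isAddCommGroup : AddCommGroup carrier]
  [isModule : Module ℚ carrier]
  grading : ℤ → Submodule ℚ carrier
  isInternal : DirectSum.IsInternal grading
  bracket : carrier →ₗ[ℚ] carrier →ₗ[ℚ] carrier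
  d : carrier →ₗ[ℚ] carrier
  bracket_mem : ∀ {i j : ℤ} {x y : carrier}, x ∈ grading i → y ∈ grading j →
      bracket x y ∈ grading (i + j)
  d_mem : ∀ {i : ℤ} {x : carrier}, x ∈ grading i → d x ∈ grading (i - 1)
  antisymm : ∀ {i j : ℤ} {x y : carrier}, x ∈ grading i → y ∈ grading j →
      bracket x y = -(((-1 : ℚ) ^ (i * j)) • bracket y x)
  jacobi : ∀ {i j k : ℤ} {x y z : carrier}, x ∈ grading i → y ∈ grading j → z ∈ grading k →
      ((-1 : ℚ) ^ (i * k)) • bracket x (bracket y z) +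
      ((-1 : ℚ) ^ (j * i)) • bracket y (bracket z x) +
      ((-1 : ℚ) ^ (k * j)) • bracket z (bracket x y) = 0
  leibniz : ∀ {i : ℤ} {x : carrier}, x ∈ grading i → ∀ y : carrier,
      d (bracket x y) = bracket (d x) y + ((-1 : ℚ) ^ i) • bracket x (d y)
  d_squared : ∀ x : carrier, d (d x) = 0

attribute [instance] DGL.isAddCommGroup DGL.isModule


/-- A morphism of differential graded Lie algebras. -/
structure DGLHom (L M : DGL) where
  toFun : L.carrier →ₗ[ℚ] M.carrier
  map_grading : ∀ (i : ℤ) (x : L.carrier), x ∈ L.grading i → toFun x ∈ M.grading i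
  map_bracket : ∀ x y : L.carrier, toFun (L.bracket x y) = M.bracket (toFun x) (toFun y)
  map_d : ∀ x : L.carrier, toFun (L.d x) = M.d (toFun x)

namespace DGL

variable (L : DGL)

def MaurerCartan : Set L.carrier :=
  {a | a ∈ L.grading (-1) ∧ L.d a = -((1/2 : ℚ) • L.bracket a a)}

variable {L}

theorem bracket_comm_of_mem_neg_one {a b : L.carrier} (ha : a ∈ L.grading (-1))
    (hb : b ∈ L.grading (-1)) : L.bracket a b = L.bracket b a := by
  simpa using L.antisymm ha hb

/-- The right-hand side is the Maurer–Cartan equation of `y` for the twisted differential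
`d_a = d + [a, -]`. -/
theorem add_mem_maurerCartan_iff {a y : L.carrier} (ha : a ∈ L.MaurerCartan)
    (hy : y ∈ L.grading (-1)) :
    a + y ∈ L.MaurerCartan ↔
      L.d y + L.bracket a y = -((1/2 : ℚ) • L.bracket y y) := by
  have hcomm := bracket_comm_of_mem_neg_one ha.1 hy
  have hsq : L.bracket (a + y) (a + y) =
      L.bracket a a + (2 : ℚ) • L.bracket a y + L.bracket y y := by
    simp only [map_add, LinearMap.add_apply, hcomm]
    module
  simp only [MaurerCartan, Set.mem_ofPred_eq, (L.grading (-1)).add_mem ha.1 hy, true_and]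
  rw [hsq, map_add, ha.2]
  constructor <;> intro h <;> linear_combination (norm := module) h

end DGL

namespace DGLHom

variable {L M : DGL}

theorem map_maurerCartan (f : DGLHom L M) {a : L.carrier} (ha : a ∈ L.MaurerCartan) :
    f.toFun a ∈ M.MaurerCartan := by
  refine ⟨f.map_grading _ _ ha.1, ?_⟩
  rw [← f.map_d, ha.2, map_neg, map_smul, f.map_bracket]

theorem sub_section_retraction_mem_ker (p : DGLHom M L) (s : DGLHom L M)
    (hsec : ∀ x : L.carrier, p.toFun (s.toFun x) = x) (z : M.carrier) :
    z - s.toFun (p.toFun z) ∈ LinearMap.ker p.toFun := by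
  simp [hsec]

theorem eq_retraction_of_eq_section_add (p : DGLHom M L) (s : DGLHom L M)
    (hsec : ∀ x : L.carrier, p.toFun (s.toFun x) = x) {z : M.carrier} {x : L.carrier}
    {y : M.carrier} (hy : y ∈ LinearMap.ker p.toFun) (hz : z = s.toFun x + y) :
    x = p.toFun z := by
  simp_all

end DGLHom

/-- let `M ≅ L ⊕ K` be a retractive dgl over `L` (section `s`, retraction `p`,
kernel `K = ker p`).  Every Maurer–Cartan element `z` of `M` can be written uniquely as
`z = x + y` where `x ∈ MC(L)` (included via `s`) and `y ∈ K` is a Maurer–Cartan element of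
`(K, d_x)`, the kernel with the differential perturbed by `x`. -/
theorem stmt4 (L M : DGL) (p : DGLHom M L) (s : DGLHom L M)
    (hsec : ∀ x : L.carrier, p.toFun (s.toFun x) = x)
    (z : M.carrier) (hz : z ∈ M.grading (-1))
    (hzMC : M.d z = -((1/2 : ℚ) • M.bracket z z)) :
    ∃! xy : L.carrier × M.carrier,
      xy.1 ∈ L.grading (-1) ∧
      L.d xy.1 = -((1/2 : ℚ) • L.bracket xy.1 xy.1) ∧
      xy.2 ∈ LinearMap.ker p.toFun ∧
      xy.2 ∈ M.grading (-1) ∧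
      z = s.toFun xy.1 + xy.2 ∧
      M.d xy.2 + M.bracket (s.toFun xy.1) xy.2 = -((1/2 : ℚ) • M.bracket xy.2 xy.2) := by
  have hzMC' : z ∈ M.MaurerCartan := ⟨hz, hzMC⟩
  have hx : p.toFun z ∈ L.MaurerCartan := p.map_maurerCartan hzMC'
  have hsx : s.toFun (p.toFun z) ∈ M.MaurerCartan := s.map_maurerCartan hx
  have hy : z - s.toFun (p.toFun z) ∈ M.grading (-1) := (M.grading (-1)).sub_mem hz hsx.1
  refine ⟨(p.toFun z, z - s.toFun (p.toFun z)), ⟨hx.1, hx.2,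
    p.sub_section_retraction_mem_ker s hsec z, hy, (add_sub_cancel _ _).symm, ?_⟩, ?_⟩
  · rw [← DGL.add_mem_maurerCartan_iff hsx hy, add_sub_cancel]
    exact hzMC'
  · rintro ⟨x', y'⟩ ⟨-, -, hy'ker, -, hz', -⟩
    have hx' := p.eq_retraction_of_eq_section_add s hsec hy'ker hz'
    refine Prod.ext hx' ?_
    rw [← hx', hz', add_sub_cancel_left]
end

section
/- Let ℒ₁ = (𝕃̂(a,b,c), d) be the Lawrence–Sullivan interval: the completed free Lie algebra on generators a, b of degree −1 and c of degree 0, where a and b are Maurer–Cartan elements (da = -(1/2)[a,a], db = -(1/2)[b,b]) and dc = ad_c(b) + Σ_{n≥0} (B_n/n!) ad_c^n(b−a), with B_n the Bernoulli numbers. Then d² = 0 on the generator c, i.e. d(dc) = 0 in 𝕃̂(a,b,c). -/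
/-- A ℤ-graded Lie algebra over ℚ (with Koszul signs). -/
structure GrLie where
  carrier : Type
  [isAddCommGroup : AddCommGroup carrier]
  [isModule : Module ℚ carrier]
  grading : ℤ → Submodule ℚ carrier
  isInternal : DirectSum.IsInternal grading
  bracket : carrier →ₗ[ℚ] carrier →ₗ[ℚ] carrier
  bracket_mem : ∀ {i j : ℤ} {x y : carrier}, x ∈ grading i → y ∈ grading j →
      bracket x y ∈ grading (i + j)
  antisymm : ∀ {i j : ℤ} {x y : carrier}, x ∈ grading i → y ∈ grading j →
      bracket x y = -(((-1 : ℚ) ^ (i * j)) • bracket y x)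
  jacobi : ∀ {i j k : ℤ} {x y z : carrier}, x ∈ grading i → y ∈ grading j → z ∈ grading k →
      ((-1 : ℚ) ^ (i * k)) • bracket x (bracket y z) +
      ((-1 : ℚ) ^ (j * i)) • bracket y (bracket z x) +
      ((-1 : ℚ) ^ (k * j)) • bracket z (bracket x y) = 0

attribute [instance] GrLie.isAddCommGroup GrLie.isModule

/-- Iterated adjoint action `ad_c^n`. -/
def adpow (E : GrLie) (c : E.carrier) : ℕ → E.carrier → E.carrier
  | 0 => fun x => x
  | n + 1 => fun x => E.bracket c (adpow E c n x)

/-!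
By the Maurer–Cartan equation for `b`, `δ (δ c) = [S, b] + δ S`. Expanding `δ S` term by term
with `δ ∘ ad_c - ad_c ∘ δ = ad_{δ c}` and `δ c = [c, b] + S`, everything linear in `x = b - a`
cancels and what is left is quadratic in `x`. Encode `[ad_cⁱ x, ad_cʲ x]` by the monomial `uⁱ vʲ`:
then `ad_c` acts as multiplication by `u + v`, and the encoding is symmetric in `u, v`. Up to an
error lying arbitrarily deep in the filtration, the quadratic part is the image of
`B(u) (B(u+v) - B(v)) / u + ½ B(u+v)` with `B(w) = w / (eʷ - 1)`. Its symmetrisation in `u, v`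
vanishes because `B(w) (eʷ - 1) = w`, and the filtration is separated.
-/

open PowerSeries Finset

/-- `𝔸 = ℚ[u, v]` with `u = X 0` and `v = X 1`; power series over it are in a third variable `t`. -/
local notation "𝔸" => MvPolynomial (Fin 2) ℚ

theorem mul_pow_sub_pow_mul {R : Type*} [Ring R] (a b : R) (n : ℕ) :
    a * b ^ n - b ^ n * a = ∑ k ∈ range n, b ^ k * (a * b - b * a) * b ^ (n - 1 - k) := by
  induction n with
  | zero => simp
  | succ n ih =>
    have hshift : ∀ k ∈ range n, b ^ k * (a * b - b * a) * b ^ (n + 1 - 1 - k)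
        = b ^ k * (a * b - b * a) * b ^ (n - 1 - k) * b := fun k hk => by
      rw [show n + 1 - 1 - k = n - 1 - k + 1 by have := mem_range.mp hk; omega, pow_succ]
      noncomm_ring
    rw [sum_range_succ, sum_congr rfl hshift, ← sum_mul, ← ih, Nat.add_sub_cancel, Nat.sub_self,
      pow_zero, mul_one]
    noncomm_ring

section BernoulliSeries

variable {R : Type*} [CommRing R] [Algebra ℚ R]

noncomputable def bernoulliSeries (w : R) : R⟦X⟧ := rescale w (bernoulliPowerSeries R)

theorem coeff_bernoulliSeries (w : R) (n : ℕ) :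
    coeff n (bernoulliSeries w) = algebraMap ℚ R (bernoulli n / n.factorial) * w ^ n := by
  rw [bernoulliSeries, coeff_rescale, bernoulliPowerSeries, coeff_mk, mul_comm]

theorem bernoulliSeries_mul_exp_sub_one (w : R) :
    bernoulliSeries w * (rescale w (exp R) - 1) = C w * X := by
  simpa [bernoulliSeries, map_sub, rescale_X] using
    congrArg (rescale w) (bernoulliPowerSeries_mul_exp_sub_one R)

theorem map_bernoulliSeries {S : Type*} [CommRing S] [Algebra ℚ S] (φ : R →ₐ[ℚ] S)
    (w : R) : map (φ : R →+* S) (bernoulliSeries w) = bernoulliSeries (φ w) := by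
  ext n
  simp [coeff_bernoulliSeries]

theorem rescale_exp_sub_one_ne_zero {w : R} (hw : w ≠ 0) :
    rescale w (exp R) - 1 ≠ 0 := fun h => hw <| by
  simpa [coeff_rescale, coeff_exp] using congrArg (coeff 1) h

end BernoulliSeries

noncomputable def bernoulliDiffSeries : 𝔸⟦X⟧ :=
  mk fun n => algebraMap ℚ 𝔸 (bernoulli n / n.factorial) *
    ∑ k ∈ range n, (MvPolynomial.X 0 + MvPolynomial.X 1) ^ k * MvPolynomial.X 1 ^ (n - 1 - k)

theorem C_mul_bernoulliDiffSeries :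
    C (MvPolynomial.X 0) * bernoulliDiffSeries =
      bernoulliSeries (MvPolynomial.X 0 + MvPolynomial.X 1) -
        bernoulliSeries (MvPolynomial.X 1) := by
  refine PowerSeries.ext fun n => ?_
  rw [coeff_C_mul, bernoulliDiffSeries, coeff_mk, map_sub, coeff_bernoulliSeries,
    coeff_bernoulliSeries, ← mul_sub, ← geom_sum₂_mul, add_sub_cancel_right]
  ring

noncomputable def swapVars : 𝔸 →ₐ[ℚ] 𝔸 := MvPolynomial.rename (Equiv.swap 0 1)

theorem bernoulli_quadratic_identity :
    bernoulliDiffSeries * bernoulliSeries (MvPolynomial.X 0)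
      + map (swapVars : 𝔸 →+* 𝔸) (bernoulliDiffSeries * bernoulliSeries (MvPolynomial.X 0))
      + X * bernoulliSeries (MvPolynomial.X 0 + MvPolynomial.X 1) = 0 := by
  set u : 𝔸 := MvPolynomial.X 0
  set v : 𝔸 := MvPolynomial.X 1
  have hσu : swapVars u = v := by simp [swapVars, u, v]
  have hσv : swapVars v = u := by simp [swapVars, u, v]
  have hu := bernoulliSeries_mul_exp_sub_one u
  have hv := bernoulliSeries_mul_exp_sub_one v
  have huv := bernoulliSeries_mul_exp_sub_one (u + v)
  rw [← exp_mul_exp_eq_exp_add, map_add] at huv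
  have hH := C_mul_bernoulliDiffSeries
  have hH' := congrArg (map (swapVars : 𝔸 →+* 𝔸)) hH
  simp only [map_mul, map_sub, map_C, map_bernoulliSeries, map_add] at hH' ⊢
  rw [AlgHom.coe_toRingHom, hσu, hσv, add_comm v u] at hH'
  rw [hσu]
  have hne : C u * C v * ((rescale u (exp 𝔸) - 1) * (rescale v (exp 𝔸) - 1)) ≠ 0 := by
    refine mul_ne_zero (mul_ne_zero ?_ ?_) (mul_ne_zero ?_ ?_)
    · exact (map_ne_zero_iff _ C_injective).mpr (MvPolynomial.X_ne_zero _)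
    · exact (map_ne_zero_iff _ C_injective).mpr (MvPolynomial.X_ne_zero _)
    · exact rescale_exp_sub_one_ne_zero (MvPolynomial.X_ne_zero _)
    · exact rescale_exp_sub_one_ne_zero (MvPolynomial.X_ne_zero _)
  refine (mul_eq_zero.mp ?_).resolve_left hne
  -- multiplied by `u v (eᵘ - 1)(eᵛ - 1)`, the identity only uses `B(w) (eʷ - 1) = w t`
  -- for `w = u, v, u + v` and the defining property of `bernoulliDiffSeries`
  linear_combination
    (C v * (rescale v (exp 𝔸) - 1) * (C u * bernoulliDiffSeries) - C u * C v * X) * hu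
    + (C v * (rescale v (exp 𝔸) - 1) * (C u * X)) * hH
    + (C u * (rescale u (exp 𝔸) - 1) * (C v * map (swapVars : 𝔸 →+* 𝔸) bernoulliDiffSeries) -
      C u * C v * X) * hv
    + (C u * (rescale u (exp 𝔸) - 1) * (C v * X)) * hH'
    + (C u * C v * X) * huv

namespace GrLie

section Brackets

variable (E : GrLie)

theorem bracket_comm_of_mem_neg_one {y z : E.carrier} (hy : y ∈ E.grading (-1))
    (hz : z ∈ E.grading (-1)) : E.bracket y z = E.bracket z y := by
  rw [E.antisymm hy hz]
  norm_num

theorem bracket_bracket_of_mem_zero_of_mem {c y z : E.carrier} {j k : ℤ} (hc : c ∈ E.grading 0)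
    (hy : y ∈ E.grading j) (hz : z ∈ E.grading k) :
    E.bracket c (E.bracket y z) = E.bracket (E.bracket c y) z + E.bracket y (E.bracket c z) := by
  have hcy : E.bracket c y ∈ E.grading j := zero_add j ▸ E.bracket_mem hc hy
  have hJ := E.jacobi hc hy hz
  rw [E.antisymm hz hc, E.antisymm hz hcy] at hJ
  simp only [zero_mul, mul_zero, zpow_zero, one_smul, map_neg, smul_neg, smul_smul, ← mul_zpow,
    neg_mul_neg, mul_one, one_zpow] at hJ
  rw [← sub_eq_zero, ← hJ]
  abel

theorem bracket_bracket_of_mem_zero {c : E.carrier} (hc : c ∈ E.grading 0) (y z : E.carrier) :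
    E.bracket c (E.bracket y z) = E.bracket (E.bracket c y) z + E.bracket y (E.bracket c z) := by
  have hgen : ∀ w : E.carrier, w ∈ ⨆ i, E.grading i := fun w =>
    E.isInternal.submodule_iSup_eq_top ▸ Submodule.mem_top
  induction hgen y using Submodule.iSup_induction' with
  | mem j y hy =>
    induction hgen z using Submodule.iSup_induction' with
    | mem k z hz => exact E.bracket_bracket_of_mem_zero_of_mem hc hy hz
    | zero => simp
    | add z z' _ _ h h' =>
      simp only [map_add, h, h']
      abel
  | zero => simp
  | add y y' _ _ h h' =>
    simp only [map_add, LinearMap.add_apply, h, h']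
    abel

end Brackets

section AdjointPowers

variable {E : GrLie} {c : E.carrier}

theorem adpow_eq_pow_apply (n : ℕ) (y : E.carrier) : adpow E c n y = (E.bracket c ^ n) y := by
  induction n with
  | zero => rfl
  | succ n ih => rw [pow_succ', Module.End.mul_apply, ← ih]; rfl

theorem pow_bracket_mem (hc : c ∈ E.grading 0) {i : ℤ} {y : E.carrier} (hy : y ∈ E.grading i)
    (n : ℕ) : (E.bracket c ^ n) y ∈ E.grading i := by
  induction n with
  | zero => exact hy
  | succ n ih => rw [pow_succ', Module.End.mul_apply]; exact zero_add i ▸ E.bracket_mem hc ih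

variable (c) in
/-- The derivative of `ad_c ^ n` in the direction `y`, applied to `z`. -/
noncomputable def adPowDeriv (y : E.carrier) (n : ℕ) (z : E.carrier) : E.carrier :=
  ∑ k ∈ range n, (E.bracket c ^ k) (E.bracket y ((E.bracket c ^ (n - 1 - k)) z))

theorem adPowDeriv_add_left (y y' : E.carrier) (n : ℕ) (z : E.carrier) :
    adPowDeriv c (y + y') n z = adPowDeriv c y n z + adPowDeriv c y' n z := by
  simp only [adPowDeriv, map_add, LinearMap.add_apply, sum_add_distrib]

variable (c) in
noncomputable def bernoulliPartialSum (x : E.carrier) (N : ℕ) : E.carrier :=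
  ∑ n ∈ range N, (bernoulli n / n.factorial : ℚ) • (E.bracket c ^ n) x

theorem adPowDeriv_bernoulliPartialSum (x : E.carrier) (N n : ℕ) (z : E.carrier) :
    adPowDeriv c (bernoulliPartialSum c x N) n z =
      ∑ j ∈ range N,
        (bernoulli j / j.factorial : ℚ) • adPowDeriv c ((E.bracket c ^ j) x) n z := by
  simp only [adPowDeriv, bernoulliPartialSum, map_sum, map_smul, LinearMap.sum_apply,
    LinearMap.smul_apply, smul_sum]
  exact sum_comm

theorem apply_pow_bracket (δ : E.carrier →ₗ[ℚ] E.carrier)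
    (hδ : ∀ y, δ (E.bracket c y) = E.bracket (δ c) y + E.bracket c (δ y))
    (n : ℕ) (y : E.carrier) :
    δ ((E.bracket c ^ n) y) = (E.bracket c ^ n) (δ y) + adPowDeriv c (δ c) n y := by
  have hcomm : δ * E.bracket c - E.bracket c * δ = E.bracket (δ c) := by
    ext y
    simp [hδ]
  have := congrArg (· y) (mul_pow_sub_pow_mul δ (E.bracket c) n)
  simp only [LinearMap.sub_apply, Module.End.mul_apply, LinearMap.sum_apply, hcomm] at this
  rw [adPowDeriv, ← this]
  abel

theorem pow_bracket_bracket_right (hc : c ∈ E.grading 0) (n : ℕ) (y b : E.carrier) :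
    (E.bracket c ^ n) (E.bracket y b) = E.bracket ((E.bracket c ^ n) y) b +
      ∑ k ∈ range n,
        (E.bracket c ^ k) (E.bracket ((E.bracket c ^ (n - 1 - k)) y) (E.bracket c b)) := by
  have hcomm : E.bracket.flip b * E.bracket c - E.bracket c * E.bracket.flip b =
      -E.bracket.flip (E.bracket c b) := by
    ext y
    simp [E.bracket_bracket_of_mem_zero hc]
  have := congrArg (· y) (mul_pow_sub_pow_mul (E.bracket.flip b) (E.bracket c) n)
  simp only [LinearMap.sub_apply, Module.End.mul_apply, LinearMap.sum_apply, hcomm,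
    LinearMap.neg_apply, map_neg, sum_neg_distrib, LinearMap.flip_apply] at this
  rw [← neg_sub, neg_inj] at this
  rw [← this]
  abel

end AdjointPowers

section MaurerCartan

variable {E : GrLie} {a b c S : E.carrier} {δ : E.carrier →ₗ[ℚ] E.carrier}

theorem apply_sub_of_maurerCartan (ha : a ∈ E.grading (-1)) (hb : b ∈ E.grading (-1))
    (hδa : δ a = -((1/2 : ℚ) • E.bracket a a))
    (hδb : δ b = -((1/2 : ℚ) • E.bracket b b)) :
    δ (b - a) = -E.bracket (b - a) b + (1/2 : ℚ) • E.bracket (b - a) (b - a) := by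
  simp only [map_sub, LinearMap.sub_apply, hδa, hδb, E.bracket_comm_of_mem_neg_one ha hb]
  module

theorem apply_apply_of_maurerCartan (hc : c ∈ E.grading 0) (hb : b ∈ E.grading (-1))
    (hδ : ∀ y, δ (E.bracket c y) = E.bracket (δ c) y + E.bracket c (δ y))
    (hδb : δ b = -((1/2 : ℚ) • E.bracket b b)) (hδc : δ c = E.bracket c b + S) :
    δ (δ c) = E.bracket S b + δ S := by
  have hcb : E.bracket c b ∈ E.grading (-1) := zero_add (-1 : ℤ) ▸ E.bracket_mem hc hb
  rw [hδc, map_add, hδ, hδc, hδb, map_neg, map_smul, E.bracket_bracket_of_mem_zero hc,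
    E.bracket_comm_of_mem_neg_one hb hcb, map_add, LinearMap.add_apply]
  module

theorem bracket_add_apply_pow_bracket (hc : c ∈ E.grading 0) (ha : a ∈ E.grading (-1))
    (hb : b ∈ E.grading (-1))
    (hδ : ∀ y, δ (E.bracket c y) = E.bracket (δ c) y + E.bracket c (δ y))
    (hδa : δ a = -((1/2 : ℚ) • E.bracket a a)) (hδb : δ b = -((1/2 : ℚ) • E.bracket b b))
    (hδc : δ c = E.bracket c b + S) (n : ℕ) :
    E.bracket ((E.bracket c ^ n) (b - a)) b + δ ((E.bracket c ^ n) (b - a)) =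
      (1/2 : ℚ) • (E.bracket c ^ n) (E.bracket (b - a) (b - a)) + adPowDeriv c S n (b - a) := by
  have hx : b - a ∈ E.grading (-1) := sub_mem hb ha
  have hcb : E.bracket c b ∈ E.grading (-1) := zero_add (-1 : ℤ) ▸ E.bracket_mem hc hb
  have hcomm : ∀ m, E.bracket (E.bracket c b) ((E.bracket c ^ m) (b - a)) =
      E.bracket ((E.bracket c ^ m) (b - a)) (E.bracket c b) := fun m =>
    E.bracket_comm_of_mem_neg_one hcb (pow_bracket_mem hc hx m)
  rw [apply_pow_bracket δ hδ, apply_sub_of_maurerCartan ha hb hδa hδb, map_add, map_neg,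
    map_smul, pow_bracket_bracket_right hc, hδc, adPowDeriv_add_left, adPowDeriv]
  simp only [hcomm]
  abel

end MaurerCartan

section QuadraticPart

variable {E : GrLie} {c x : E.carrier}

variable (c x) in
noncomputable def adBracket : 𝔸 →ₗ[ℚ] E.carrier :=
  (MvPolynomial.basisMonomials (Fin 2) ℚ).constr ℚ fun m =>
    E.bracket ((E.bracket c ^ m 0) x) ((E.bracket c ^ m 1) x)

theorem adBracket_monomial (m : Fin 2 →₀ ℕ) (r : ℚ) :
    adBracket c x (MvPolynomial.monomial m r) =
      r • E.bracket ((E.bracket c ^ m 0) x) ((E.bracket c ^ m 1) x) := by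
  have h : MvPolynomial.monomial m r = r • MvPolynomial.basisMonomials (Fin 2) ℚ m := by
    simp [MvPolynomial.smul_monomial]
  rw [h, map_smul, adBracket, Module.Basis.constr_basis]

theorem adBracket_X_pow_mul_X_pow (i j : ℕ) :
    adBracket c x (MvPolynomial.X 0 ^ i * MvPolynomial.X 1 ^ j) =
      E.bracket ((E.bracket c ^ i) x) ((E.bracket c ^ j) x) := by
  rw [MvPolynomial.X_pow_eq_monomial, MvPolynomial.X_pow_eq_monomial, MvPolynomial.monomial_mul,
    adBracket_monomial]
  simp

theorem adBracket_add_mul (hc : c ∈ E.grading 0) (p : 𝔸) :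
    adBracket c x ((MvPolynomial.X 0 + MvPolynomial.X 1) * p) = E.bracket c (adBracket c x p) := by
  suffices (adBracket c x).comp (LinearMap.mulLeft ℚ (MvPolynomial.X 0 + MvPolynomial.X 1)) =
      (E.bracket c).comp (adBracket c x) from congrArg (· p) this
  refine (MvPolynomial.basisMonomials (Fin 2) ℚ).ext fun m => ?_
  have hX : ∀ i, MvPolynomial.X i * MvPolynomial.monomial m (1 : ℚ) =
      MvPolynomial.monomial (Finsupp.single i 1 + m) 1 := fun i => by
    rw [MvPolynomial.monomial_single_add, pow_one]
  simp only [LinearMap.comp_apply, LinearMap.mulLeft_apply, MvPolynomial.coe_basisMonomials,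
    add_mul, hX, map_add, adBracket_monomial, one_smul, E.bracket_bracket_of_mem_zero hc]
  simp [pow_succ', add_comm 1]

theorem adBracket_pow_mul (hc : c ∈ E.grading 0) (k : ℕ) (p : 𝔸) :
    adBracket c x ((MvPolynomial.X 0 + MvPolynomial.X 1) ^ k * p) =
      (E.bracket c ^ k) (adBracket c x p) := by
  induction k with
  | zero => simp
  | succ k ih =>
    rw [pow_succ', mul_assoc, adBracket_add_mul hc, ih, pow_succ', Module.End.mul_apply]

theorem adBracket_swapVars (hc : c ∈ E.grading 0) (hx : x ∈ E.grading (-1)) (p : 𝔸) :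
    adBracket c x (swapVars p) = adBracket c x p := by
  suffices (adBracket c x).comp swapVars.toLinearMap = adBracket c x from congrArg (· p) this
  refine (MvPolynomial.basisMonomials (Fin 2) ℚ).ext fun m => ?_
  simp only [LinearMap.comp_apply, AlgHom.toLinearMap_apply, MvPolynomial.coe_basisMonomials,
    swapVars, MvPolynomial.rename_monomial, adBracket_monomial, one_smul]
  rw [E.bracket_comm_of_mem_neg_one (pow_bracket_mem hc hx _) (pow_bracket_mem hc hx _)]
  simp [Finsupp.mapDomain_equiv_apply]

theorem adBracket_coeff_mul_coeff (hc : c ∈ E.grading 0) (n j : ℕ) :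
    adBracket c x (coeff n bernoulliDiffSeries * coeff j (bernoulliSeries (MvPolynomial.X 0))) =
      (bernoulli n / n.factorial * (bernoulli j / j.factorial) : ℚ) •
        adPowDeriv c ((E.bracket c ^ j) x) n x := by
  rw [bernoulliDiffSeries, coeff_mk, coeff_bernoulliSeries, mul_mul_mul_comm, ← map_mul,
    sum_mul, ← Algebra.smul_def, map_smul, map_sum, adPowDeriv]
  congr 1
  refine sum_congr rfl fun k _ => ?_
  rw [mul_assoc, mul_comm (MvPolynomial.X 1 ^ _), adBracket_pow_mul hc, adBracket_X_pow_mul_X_pow]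

theorem adBracket_coeff_succ_X_mul (hc : c ∈ E.grading 0) (n : ℕ) :
    adBracket c x (coeff (n + 1) (X * bernoulliSeries (MvPolynomial.X 0 + MvPolynomial.X 1))) =
      (bernoulli n / n.factorial : ℚ) • (E.bracket c ^ n) (E.bracket x x) := by
  rw [coeff_succ_X_mul, coeff_bernoulliSeries, ← Algebra.smul_def, map_smul,
    ← mul_one (_ ^ n), adBracket_pow_mul hc,
    show (1 : 𝔸) = MvPolynomial.X 0 ^ 0 * MvPolynomial.X 1 ^ 0 by simp,
    adBracket_X_pow_mul_X_pow, pow_zero, Module.End.one_apply]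

theorem adBracket_coeff_bernoulli (hc : c ∈ E.grading 0) (hx : x ∈ E.grading (-1)) (e : ℕ) :
    adBracket c x (coeff e (bernoulliDiffSeries * bernoulliSeries (MvPolynomial.X 0))) =
      -((1/2 : ℚ) • adBracket c x
        (coeff e (X * bernoulliSeries (MvPolynomial.X 0 + MvPolynomial.X 1)))) := by
  have h := congrArg (fun f => adBracket c x (coeff e f)) bernoulli_quadratic_identity
  simp only [map_add, coeff_map, AlgHom.coe_toRingHom, adBracket_swapVars hc hx, map_zero] at h
  rw [eq_neg_iff_add_eq_zero, ← smul_right_inj (two_ne_zero' ℚ), smul_zero, ← h]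
  module

theorem sum_bernoulli_smul_quadratic (hc : c ∈ E.grading 0) (hx : x ∈ E.grading (-1))
    (M : ℕ) :
    ∑ n ∈ range (M + 1), (bernoulli n / n.factorial : ℚ) •
        ((1/2 : ℚ) • (E.bracket c ^ n) (E.bracket x x) +
          adPowDeriv c (bernoulliPartialSum c x (M + 1 - n)) n x) =
      ((1/2 : ℚ) * (bernoulli M / M.factorial)) • (E.bracket c ^ M) (E.bracket x x) := by
  set H := bernoulliDiffSeries * bernoulliSeries (MvPolynomial.X 0)
  set G := X * bernoulliSeries (MvPolynomial.X 0 + MvPolynomial.X 1 : 𝔸)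
  have hcauchy : ∑ n ∈ range (M + 1), (bernoulli n / n.factorial : ℚ) •
      adPowDeriv c (bernoulliPartialSum c x (M + 1 - n)) n x =
      ∑ e ∈ range (M + 1), adBracket c x (coeff e H) := by
    simp only [adPowDeriv_bernoulliPartialSum, smul_sum, smul_smul,
      ← adBracket_coeff_mul_coeff hc, H, coeff_mul, Nat.sum_antidiagonal_eq_sum_range_succ_mk,
      map_sum]
    exact (sum_range_diag_flip _ _).symm
  have hshift : ∑ n ∈ range (M + 1), adBracket c x (coeff (n + 1) G) =
      ∑ e ∈ range (M + 1), adBracket c x (coeff e G) + adBracket c x (coeff (M + 1) G) := by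
    rw [← sum_range_succ, sum_range_succ' _ (M + 1), coeff_zero_X_mul, map_zero, add_zero]
  rw [sum_congr rfl fun n _ => by rw [smul_add, smul_comm, ← adBracket_coeff_succ_X_mul hc],
    sum_add_distrib, ← smul_sum, hshift, hcauchy,
    sum_congr rfl fun e _ => adBracket_coeff_bernoulli hc hx e, sum_neg_distrib, ← smul_sum,
    adBracket_coeff_succ_X_mul hc]
  module

end QuadraticPart

structure IsFiltration (E : GrLie) (F : ℕ → Submodule ℚ E.carrier) : Prop where
  one_eq_top : F 1 = ⊤
  succ_le : ∀ n, F (n + 1) ≤ F n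
  bracket_mem : ∀ (p q : ℕ) (x y : E.carrier), x ∈ F p → y ∈ F q →
    E.bracket x y ∈ F (p + q)

namespace IsFiltration

variable {E : GrLie} {F : ℕ → Submodule ℚ E.carrier}

theorem mem_one (hF : E.IsFiltration F) (y : E.carrier) : y ∈ F 1 :=
  hF.one_eq_top ▸ Submodule.mem_top

theorem antitone (hF : E.IsFiltration F) : Antitone F := antitone_nat_of_succ_le hF.succ_le

theorem pow_bracket_mem (hF : E.IsFiltration F) (c : E.carrier) {y : E.carrier} {p : ℕ}
    (hy : y ∈ F p) (k : ℕ) : (E.bracket c ^ k) y ∈ F (k + p) := by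
  induction k with
  | zero => simpa using hy
  | succ k ih =>
    rw [pow_succ', Module.End.mul_apply, add_comm k, add_assoc]
    exact hF.bracket_mem 1 (k + p) c _ (hF.mem_one c) ih

theorem adPowDeriv_mem (hF : E.IsFiltration F) (c z : E.carrier) {y : E.carrier} {p : ℕ}
    (hy : y ∈ F p) (n : ℕ) : adPowDeriv c y n z ∈ F (p + n) :=
  Submodule.sum_mem _ fun k hk => hF.antitone (by have := mem_range.mp hk; omega)
    (hF.pow_bracket_mem c (hF.bracket_mem _ _ _ _ hy (hF.pow_bracket_mem c (hF.mem_one z) _)) k)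

end IsFiltration

variable {E : GrLie} {F : ℕ → Submodule ℚ E.carrier} {a b c S : E.carrier}
  {δ : E.carrier →ₗ[ℚ] E.carrier}

theorem apply_apply_mem_of_bernoulli (hF : E.IsFiltration F)
    (hδ_filt : ∀ (n : ℕ), ∀ y ∈ F n, δ y ∈ F n)
    (hδ : ∀ y, δ (E.bracket c y) = E.bracket (δ c) y + E.bracket c (δ y))
    (ha : a ∈ E.grading (-1)) (hb : b ∈ E.grading (-1)) (hc : c ∈ E.grading 0)
    (hδa : δ a = -((1/2 : ℚ) • E.bracket a a)) (hδb : δ b = -((1/2 : ℚ) • E.bracket b b))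
    (hS : ∀ N : ℕ, S - bernoulliPartialSum c (b - a) N ∈ F (N + 1))
    (hδc : δ c = E.bracket c b + S) (M : ℕ) :
    δ (δ c) ∈ F (M + 2) := by
  set x := b - a
  set P := bernoulliPartialSum c x
  -- in the `n`-th term, `S` is truncated at `M + 1 - n`, which makes the double sum triangular
  have hsplit : ∀ n, E.bracket ((E.bracket c ^ n) x) b + δ ((E.bracket c ^ n) x) =
      ((1/2 : ℚ) • (E.bracket c ^ n) (E.bracket x x) + adPowDeriv c (P (M + 1 - n)) n x) +
        adPowDeriv c (S - P (M + 1 - n)) n x := fun n => by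
    rw [bracket_add_apply_pow_bracket hc ha hb hδ hδa hδb hδc, add_assoc,
      ← adPowDeriv_add_left, add_sub_cancel]
  have hsub : ∀ y z, E.bracket y b + δ y =
      (E.bracket (y - z) b + δ (y - z)) + (E.bracket z b + δ z) := fun y z => by
    simp only [map_sub, LinearMap.sub_apply]
    abel
  have hP : E.bracket (P (M + 1)) b + δ (P (M + 1)) = ∑ n ∈ range (M + 1),
      (bernoulli n / n.factorial : ℚ) •
        (E.bracket ((E.bracket c ^ n) x) b + δ ((E.bracket c ^ n) x)) := by
    simp only [P, bernoulliPartialSum, map_sum, map_smul, LinearMap.sum_apply,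
      LinearMap.smul_apply, smul_add, sum_add_distrib]
  have hdecomp : δ (δ c) = (E.bracket (S - P (M + 1)) b + δ (S - P (M + 1))) +
      ∑ n ∈ range (M + 1),
        (bernoulli n / n.factorial : ℚ) • adPowDeriv c (S - P (M + 1 - n)) n x +
      ((1/2 : ℚ) * (bernoulli M / M.factorial)) • (E.bracket c ^ M) (E.bracket x x) := by
    rw [apply_apply_of_maurerCartan hc hb hδ hδb hδc,
      ← sum_bernoulli_smul_quadratic hc (sub_mem hb ha), add_assoc, ← sum_add_distrib,
      hsub S (P (M + 1)), hP]
    exact congrArg _ (sum_congr rfl fun n _ => by rw [← smul_add, hsplit n, add_comm])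
  rw [hdecomp]
  refine add_mem (add_mem (add_mem ?_ ?_)
    (Submodule.sum_mem _ fun n hn => Submodule.smul_mem _ _ ?_)) (Submodule.smul_mem _ _ ?_)
  · exact hF.antitone (by omega) (hF.bracket_mem _ 1 _ _ (hS (M + 1)) (hF.mem_one b))
  · exact hδ_filt _ _ (hS (M + 1))
  · exact hF.antitone (by have := mem_range.mp hn; omega)
      (hF.adPowDeriv_mem c x (hS (M + 1 - n)) n)
  · exact hF.pow_bracket_mem c (hF.bracket_mem 1 1 x x (hF.mem_one x) (hF.mem_one x)) M

end GrLie

theorem stmt18_general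
    (E : GrLie)
    (F : ℕ → Submodule ℚ E.carrier)
    (hF1 : F 1 = ⊤)
    (hFanti : ∀ n, F (n + 1) ≤ F n)
    (hFbr : ∀ (p q : ℕ) (x y : E.carrier), x ∈ F p → y ∈ F q → E.bracket x y ∈ F (p + q))
    (hFsep : (⨅ n, F n) = ⊥)
    (δ : E.carrier →ₗ[ℚ] E.carrier)
    (hδ_filt : ∀ (n : ℕ), ∀ x ∈ F n, δ x ∈ F n)
    (hδ_leibniz : ∀ (i : ℤ) (x : E.carrier), x ∈ E.grading i → ∀ y : E.carrier,
        δ (E.bracket x y) = E.bracket (δ x) y + ((-1 : ℚ) ^ i) • E.bracket x (δ y))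
    (a b c : E.carrier)
    (ha : a ∈ E.grading (-1)) (hb : b ∈ E.grading (-1)) (hc : c ∈ E.grading 0)
    (hδa : δ a = -((1/2 : ℚ) • E.bracket a a))
    (hδb : δ b = -((1/2 : ℚ) • E.bracket b b))
    (S : E.carrier)
    (hS : ∀ N : ℕ,
        S - ∑ n ∈ Finset.range N, ((bernoulli n) / (n.factorial : ℚ)) • adpow E c n (b - a)
          ∈ F (N + 1))
    (hδc : δ c = E.bracket c b + S) :
    δ (δ c) = 0 := by
  have hF : E.IsFiltration F := ⟨hF1, hFanti, hFbr⟩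
  have hδ : ∀ y, δ (E.bracket c y) = E.bracket (δ c) y + E.bracket c (δ y) := fun y => by
    simpa using hδ_leibniz 0 c hc y
  simp only [GrLie.adpow_eq_pow_apply] at hS
  have hmem : δ (δ c) ∈ ⨅ n, F n := Submodule.mem_iInf _ |>.mpr fun n =>
    hF.antitone (Nat.le_add_right n 2)
      (GrLie.apply_apply_mem_of_bernoulli hF hδ_filt hδ ha hb hc hδa hδb hS hδc n)
  rwa [hFsep, Submodule.mem_bot] at hmem

/-- the Lawrence–Sullivan interval.  Let `E` be a complete graded Lie algebra
(filtered by bracket length, `F 1 = E`, `[F p, F q] ⊆ F (p+q)`, separated) carrying a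
degree `-1` derivation `δ` (not assumed square-zero), and let `a, b` be Maurer–Cartan
elements of degree `-1` and `c` an element of degree `0` with
`δ c = [c, b] + Σ_{n ≥ 0} (Bₙ/n!) ad_c^n (b - a)`, the series converging in the
filtration (here `S` denotes its sum and `bernoulli` the Bernoulli numbers, `B₁ = -1/2`).
Then `δ (δ c) = 0`; in the completed free Lie algebra `𝕃̂(a,b,c)` this says exactly that
`d² = 0` on the generator `c`. -/
theorem stmt18
    (E : GrLie)
    (F : ℕ → Submodule ℚ E.carrier)
    (hF1 : F 1 = ⊤)
    (hFanti : ∀ n, F (n + 1) ≤ F n)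
    (hFbr : ∀ (p q : ℕ) (x y : E.carrier), x ∈ F p → y ∈ F q → E.bracket x y ∈ F (p + q))
    (hFsep : (⨅ n, F n) = ⊥)
    (δ : E.carrier →ₗ[ℚ] E.carrier)
    (hδ_mem : ∀ (k : ℤ) (x : E.carrier), x ∈ E.grading k → δ x ∈ E.grading (k - 1))
    (hδ_filt : ∀ (n : ℕ), ∀ x ∈ F n, δ x ∈ F n)
    (hδ_leibniz : ∀ (i : ℤ) (x : E.carrier), x ∈ E.grading i → ∀ y : E.carrier,
        δ (E.bracket x y) = E.bracket (δ x) y + ((-1 : ℚ) ^ i) • E.bracket x (δ y))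
    (a b c : E.carrier)
    (ha : a ∈ E.grading (-1)) (hb : b ∈ E.grading (-1)) (hc : c ∈ E.grading 0)
    (hδa : δ a = -((1/2 : ℚ) • E.bracket a a))
    (hδb : δ b = -((1/2 : ℚ) • E.bracket b b))
    (S : E.carrier)
    (hS : ∀ N : ℕ,
        S - ∑ n ∈ Finset.range N, ((bernoulli n) / (n.factorial : ℚ)) • adpow E c n (b - a)
          ∈ F (N + 1))
    (hδc : δ c = E.bracket c b + S) :
    δ (δ c) = 0 :=
  stmt18_general E F hF1 hFanti hFbr hFsep δ hδ_filt hδ_leibniz a b c ha hb hc hδa hδb S hS hδc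
end

section
/- Let L and L' be filtered dgls with filtrations {Fⁿ} and {Gⁿ}, and let f : L → L' be a filtration-preserving dgl morphism such that for every n ≥ 1 the induced map on associated graded pieces Fⁿ/Fⁿ⁺¹ → Gⁿ/Gⁿ⁺¹ is a quasi-isomorphism of chain complexes. If L and L' are complete with respect to their filtrations, then f itself is a quasi-isomorphism. (Goldman–Millson-type statement at the level of homology, assuming each filtration quotient L/Fⁿ, L'/Gⁿ is a chain complex and the filtrations are exhaustive and complete.) -/
/-- homological Goldman–Millson: let `f : L → L'` be a morphism of filtered
dgls, with filtrations `F`, `G` by differential graded Lie ideals (`F 1 = L`,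
`[F p, F q] ⊆ F (p+q)`, decreasing, `d`-stable), both complete (every Cauchy sequence
converges) and degreewise eventually trivial.  If for every `n ≥ 1` the induced map
`Fⁿ/Fⁿ⁺¹ → Gⁿ/Gⁿ⁺¹` on associated graded pieces is a quasi-isomorphism (stated
elementwise), then `f` itself is a quasi-isomorphism. -/
theorem stmt19
    (L L' : DGL) (f : DGLHom L L')
    (F : ℕ → Submodule ℚ L.carrier) (G : ℕ → Submodule ℚ L'.carrier)
    (hF1 : F 1 = ⊤) (hG1 : G 1 = ⊤)
    (hFanti : ∀ n, F (n + 1) ≤ F n) (hGanti : ∀ n, G (n + 1) ≤ G n)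
    (hFbr : ∀ (p q : ℕ) (x y : L.carrier), x ∈ F p → y ∈ F q → L.bracket x y ∈ F (p + q))
    (hGbr : ∀ (p q : ℕ) (x y : L'.carrier), x ∈ G p → y ∈ G q → L'.bracket x y ∈ G (p + q))
    (hFd : ∀ n, ∀ x ∈ F n, L.d x ∈ F n) (hGd : ∀ n, ∀ y ∈ G n, L'.d y ∈ G n)
    (hf_filt : ∀ n, ∀ x ∈ F n, f.toFun x ∈ G n)
    -- completeness of both filtrations
    (hFcomplete : ∀ x : ℕ → L.carrier, (∀ n, x (n + 1) - x n ∈ F n) →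
        ∃ y : L.carrier, ∀ n, y - x n ∈ F n)
    (hGcomplete : ∀ x : ℕ → L'.carrier, (∀ n, x (n + 1) - x n ∈ G n) →
        ∃ y : L'.carrier, ∀ n, y - x n ∈ G n)
    -- the filtrations are degreewise eventually trivial
    (hFbound : ∀ k : ℤ, ∃ N : ℕ, ∀ n, N ≤ n → F n ⊓ L.grading k = ⊥)
    (hGbound : ∀ k : ℤ, ∃ N : ℕ, ∀ n, N ≤ n → G n ⊓ L'.grading k = ⊥)
    -- the maps `Fⁿ/Fⁿ⁺¹ → Gⁿ/Gⁿ⁺¹` on associated graded pieces are quasi-isomorphisms: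
    -- surjectivity on homology of the associated graded
    (hgr_surj : ∀ (n : ℕ) (k : ℤ) (y : L'.carrier), 1 ≤ n → y ∈ G n → y ∈ L'.grading k →
        L'.d y ∈ G (n + 1) →
        ∃ x : L.carrier, x ∈ F n ∧ x ∈ L.grading k ∧ L.d x ∈ F (n + 1) ∧
          ∃ z : L'.carrier, z ∈ G n ∧ z ∈ L'.grading (k + 1) ∧
            f.toFun x - y - L'.d z ∈ G (n + 1))
    -- injectivity on homology of the associated graded
    (hgr_inj : ∀ (n : ℕ) (k : ℤ) (x : L.carrier), 1 ≤ n → x ∈ F n → x ∈ L.grading k →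
        L.d x ∈ F (n + 1) →
        (∃ z : L'.carrier, z ∈ G n ∧ z ∈ L'.grading (k + 1) ∧
            f.toFun x - L'.d z ∈ G (n + 1)) →
        ∃ w : L.carrier, w ∈ F n ∧ w ∈ L.grading (k + 1) ∧ x - L.d w ∈ F (n + 1)) :
    -- conclusion: `f` is a quasi-isomorphism
    ∀ k : ℤ,
      (∀ y ∈ L'.grading k, L'.d y = 0 →
          ∃ x ∈ L.grading k, L.d x = 0 ∧ ∃ u ∈ L'.grading (k + 1), f.toFun x - y = L'.d u) ∧
      (∀ x ∈ L.grading k, L.d x = 0 → (∃ u ∈ L'.grading (k + 1), f.toFun x = L'.d u) →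
          ∃ v ∈ L.grading (k + 1), x = L.d v) := by
  -- Step 1: the mapping cone of the associated graded map is acyclic.
  have coneGr : ∀ (n : ℕ) (k : ℤ), 1 ≤ n → ∀ x z, x ∈ F n → x ∈ L.grading k →
      z ∈ G n → z ∈ L'.grading (k + 1) → L.d x ∈ F (n + 1) →
      f.toFun x - L'.d z ∈ G (n + 1) →
      ∃ w v, w ∈ F n ∧ w ∈ L.grading (k + 1) ∧ v ∈ G n ∧ v ∈ L'.grading (k + 2) ∧
        x - L.d w ∈ F (n + 1) ∧ z - f.toFun w - L'.d v ∈ G (n + 1) := by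
    intro n k hn x z hxF hxk hzG hzk hdx hcyc
    obtain ⟨w, hwF, hwk, hw⟩ := hgr_inj n k x hn hxF hxk hdx ⟨z, hzG, hzk, hcyc⟩
    -- z' := z - f w is a cycle mod G (n+1)
    set z' := z - f.toFun w with hz'def
    have hz'G : z' ∈ G n := Submodule.sub_mem _ hzG (hf_filt n w hwF)
    have hz'k : z' ∈ L'.grading (k + 1) :=
      Submodule.sub_mem _ hzk (f.map_grading (k + 1) w hwk)
    have hdz' : L'.d z' ∈ G (n + 1) := by
      have h1 : f.toFun x - f.toFun (L.d w) ∈ G (n + 1) := by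
        rw [← map_sub]; exact hf_filt (n + 1) _ hw
      have h2 : (f.toFun x - f.toFun (L.d w)) - (f.toFun x - L'.d z) ∈ G (n + 1) :=
        Submodule.sub_mem _ h1 hcyc
      have : L'.d z' = (f.toFun x - f.toFun (L.d w)) - (f.toFun x - L'.d z) := by
        rw [hz'def, map_sub, ← f.map_d]; abel
      rw [this]; exact h2
    obtain ⟨x₂, hx₂F, hx₂k, hdx₂, v, hvG, hvk, hfin⟩ :=
      hgr_surj n (k + 1) z' hn hz'G hz'k hdz'
    refine ⟨w + x₂, -v, Submodule.add_mem _ hwF hx₂F, Submodule.add_mem _ hwk hx₂k,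
      Submodule.neg_mem _ hvG, ?_, ?_, ?_⟩
    · have : k + 1 + 1 = k + 2 := by ring
      rw [← this]; exact Submodule.neg_mem _ hvk
    · have : x - L.d (w + x₂) = (x - L.d w) - L.d x₂ := by rw [map_add]; abel
      rw [this]; exact Submodule.sub_mem _ hw hdx₂
    · have : z - f.toFun (w + x₂) - L'.d (-v) = -(f.toFun x₂ - z' - L'.d v) := by
        rw [map_add, map_neg, hz'def]; abel
      rw [this]; exact Submodule.neg_mem _ hfin
  -- Step 2: the mapping cone of f itself is acyclic, by successive approximation,
  -- terminating thanks to degreewise eventual triviality of the filtrations.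
  have Claim : ∀ (j n : ℕ) (k : ℤ), 1 ≤ n →
      F (n + j) ⊓ L.grading k = ⊥ → G (n + j) ⊓ L'.grading (k + 1) = ⊥ →
      ∀ x z, x ∈ F n → x ∈ L.grading k → z ∈ G n → z ∈ L'.grading (k + 1) →
        L.d x = 0 → f.toFun x = L'.d z →
        ∃ w v, w ∈ F n ∧ w ∈ L.grading (k + 1) ∧ v ∈ G n ∧ v ∈ L'.grading (k + 2) ∧
          x = L.d w ∧ z - f.toFun w = L'.d v := by
    intro j
    induction j with
    | zero =>
      intro n k hn hFbot hGbot x z hxF hxk hzG hzk hdx hcyc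
      have hx0 : x = 0 := by
        have : x ∈ F (n + 0) ⊓ L.grading k := ⟨by simpa using hxF, hxk⟩
        rw [hFbot] at this; simpa using this
      have hz0 : z = 0 := by
        have : z ∈ G (n + 0) ⊓ L'.grading (k + 1) := ⟨by simpa using hzG, hzk⟩
        rw [hGbot] at this; simpa using this
      exact ⟨0, 0, Submodule.zero_mem _, Submodule.zero_mem _, Submodule.zero_mem _,
        Submodule.zero_mem _, by rw [map_zero, hx0], by rw [map_zero, map_zero, hz0]; abel⟩
    | succ j ih =>
      intro n k hn hFbot hGbot x z hxF hxk hzG hzk hdx hcyc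
      obtain ⟨w₁, v₁, hw₁F, hw₁k, hv₁G, hv₁k, hw₁, hv₁⟩ :=
        coneGr n k hn x z hxF hxk hzG hzk (by rw [hdx]; exact Submodule.zero_mem _)
          (by rw [hcyc, sub_self]; exact Submodule.zero_mem _)
      set x' := x - L.d w₁ with hx'def
      set z'' := z - f.toFun w₁ - L'.d v₁ with hz''def
      have hx'k : x' ∈ L.grading k := by
        have hd : L.d w₁ ∈ L.grading k := by
          have := L.d_mem hw₁k
          rwa [show k + 1 - 1 = k by ring] at this
        exact Submodule.sub_mem _ hxk hd
      have hz''k : z'' ∈ L'.grading (k + 1) := by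
        have hd : L'.d v₁ ∈ L'.grading (k + 1) := by
          have := L'.d_mem hv₁k
          rwa [show k + 2 - 1 = k + 1 by ring] at this
        exact Submodule.sub_mem _ (Submodule.sub_mem _ hzk (f.map_grading _ _ hw₁k)) hd
      have hdx' : L.d x' = 0 := by
        rw [hx'def, map_sub, hdx, L.d_squared]; abel
      have hcyc' : f.toFun x' = L'.d z'' := by
        rw [hx'def, hz''def, map_sub, map_sub, map_sub, f.map_d, hcyc, L'.d_squared]
        abel
      have hFbot' : F (n + 1 + j) ⊓ L.grading k = ⊥ := by
        rwa [show n + 1 + j = n + (j + 1) by omega]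
      have hGbot' : G (n + 1 + j) ⊓ L'.grading (k + 1) = ⊥ := by
        rwa [show n + 1 + j = n + (j + 1) by omega]
      obtain ⟨w₂, v₂, hw₂F, hw₂k, hv₂G, hv₂k, hw₂, hv₂⟩ :=
        ih (n + 1) k (by omega) hFbot' hGbot' x' z'' hw₁ hx'k hv₁ hz''k hdx' hcyc'
      refine ⟨w₁ + w₂, v₁ + v₂, Submodule.add_mem _ hw₁F (hFanti n hw₂F),
        Submodule.add_mem _ hw₁k hw₂k, Submodule.add_mem _ hv₁G (hGanti n hv₂G),
        Submodule.add_mem _ hv₁k hv₂k, ?_, ?_⟩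
      · rw [map_add, ← hw₂, hx'def]; abel
      · rw [map_add, map_add, ← hv₂, hz''def]; abel
  -- Step 3: conclude.
  intro k
  constructor
  · -- surjectivity on homology
    intro y hyk hdy
    obtain ⟨N₁, hN₁⟩ := hFbound (k - 1)
    obtain ⟨N₂, hN₂⟩ := hGbound (k - 1 + 1)
    set j := max N₁ N₂ with hj
    have h1 : F (1 + j) ⊓ L.grading (k - 1) = ⊥ :=
      hN₁ _ (le_trans (le_max_left _ _) (Nat.le_add_left _ 1))
    have h2 : G (1 + j) ⊓ L'.grading (k - 1 + 1) = ⊥ :=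
      hN₂ _ (le_trans (le_max_right _ _) (Nat.le_add_left _ 1))
    have hyk' : y ∈ L'.grading (k - 1 + 1) := by
      rwa [show k - 1 + 1 = k by ring]
    obtain ⟨w, v, hwF, hwk, hvG, hvk, hw, hv⟩ :=
      Claim j 1 (k - 1) le_rfl h1 h2 0 y (Submodule.zero_mem _) (Submodule.zero_mem _)
        (by rw [hG1]; trivial) hyk' (by rw [map_zero]) (by rw [map_zero, hdy])
    refine ⟨w, by rwa [show k - 1 + 1 = k by ring] at hwk, hw.symm, -v,
      Submodule.neg_mem _ (by rwa [show k - 1 + 2 = k + 1 by ring] at hvk), ?_⟩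
    rw [map_neg, ← hv]; abel
  · -- injectivity on homology
    rintro x hxk hdx ⟨u, huk, hfx⟩
    obtain ⟨N₁, hN₁⟩ := hFbound k
    obtain ⟨N₂, hN₂⟩ := hGbound (k + 1)
    set j := max N₁ N₂ with hj
    have h1 : F (1 + j) ⊓ L.grading k = ⊥ :=
      hN₁ _ (le_trans (le_max_left _ _) (Nat.le_add_left _ 1))
    have h2 : G (1 + j) ⊓ L'.grading (k + 1) = ⊥ :=
      hN₂ _ (le_trans (le_max_right _ _) (Nat.le_add_left _ 1))
    obtain ⟨w, v, hwF, hwk, hvG, hvk, hw, hv⟩ :=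
      Claim j 1 k le_rfl h1 h2 x u (by rw [hF1]; trivial) hxk (by rw [hG1]; trivial)
        huk hdx hfx
    exact ⟨w, hwk, hw⟩
end
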